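/- Let k, g, α : ℝ × [0,T) → ℝ be smooth functions, 1-periodic in u, with g > 0, let ∂_s = (1/g) ∂_u, and set β = −∂_s² k − (1/2) k³. Assume ∂_t k = ∂_s² β + α ∂_s k + k² β and ∂_t g = −g k β + g ∂_s α. Then the elastic energy E(t) = (1/2) ∫₀¹ k² g du satisfies dE/dt = −∫₀¹ β² g du ≤ 0; i.e. the flow with normal velocity β = −∂_s²k − (1/2)k³ is a gradient flow for E and E is nonincreasing in time. -/

import Mathlib

/-- The arclength derivative `∂_s f = (1/g) ∂_u f` associated with a local
length element `g`. -/
noncomputable def arcDeriv (g f : ℝ → ℝ) : ℝ → ℝ := fun u => deriv f u / g u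

/-!
Differentiating under the integral, `dE/dt = ∫ (k ∂_t k + ½ k² ∂_t g / g) g du`. After inserting
the evolution equations, the tangential terms combine into `½ ∫ ∂_s(α k²) g du = ½ ∫ ∂_u(α k²) du`,
which vanishes by periodicity, and `∂_s²` is symmetric for the measure `g du` (two periodic
integrations by parts, using `g ∂_s = ∂_u`), so `∫ k ∂_s²β g du = ∫ β ∂_s²k g du`. What is left is
`∫ β (∂_s²k + ½ k³) g du = -∫ β² g du`.
-/

open MeasureTheory Set Function

theorem Function.Periodic.deriv {𝕜 F : Type*} [NontriviallyNormedField 𝕜] [NormedAddCommGroup F]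
    [NormedSpace 𝕜 F] {f : 𝕜 → F} {c : 𝕜} (hf : Periodic f c) : Periodic (deriv f) c := by
  intro x
  rw [← deriv_comp_add_const, show (fun y => f (y + c)) = f from funext hf]

section Periodic

variable {f h : ℝ → ℝ} {c : ℝ}

theorem intervalIntegral_deriv_eq_zero_of_periodic (hp : Periodic f c)
    (hf : ContDiff ℝ 1 f) : ∫ x in 0..c, deriv f x = 0 := by
  have hc : f c = f 0 := by simpa using hp 0
  rw [intervalIntegral.integral_deriv_of_contDiffOn_uIcc hf.contDiffOn, hc, sub_self]

theorem intervalIntegral_deriv_mul_eq_neg_of_periodic (hpf : Periodic f c)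
    (hph : Periodic h c) (hf : ContDiff ℝ 1 f) (hh : ContDiff ℝ 1 h) :
    ∫ x in 0..c, deriv f x * h x = -∫ x in 0..c, f x * deriv h x := by
  have hfc : f c = f 0 := by simpa using hpf 0
  have hhc : h c = h 0 := by simpa using hph 0
  rw [intervalIntegral.integral_mul_deriv_eq_deriv_mul
    (fun x _ => (hf.differentiable one_ne_zero x).hasDerivAt)
    (fun x _ => (hh.differentiable one_ne_zero x).hasDerivAt)
    (hf.continuous_deriv_one.intervalIntegrable _ _)
    (hh.continuous_deriv_one.intervalIntegrable _ _), hfc, hhc]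
  ring

end Periodic

section ArcDeriv

variable {G f h : ℝ → ℝ} {c : ℝ}

theorem arcDeriv_mul_self {u : ℝ} (hG : G u ≠ 0) : arcDeriv G f u * G u = deriv f u :=
  div_mul_cancel₀ _ hG

theorem contDiff_arcDeriv {n : WithTop ℕ∞} (hf : ContDiff ℝ (n + 1) f) (hG : ContDiff ℝ n G)
    (hG0 : ∀ u, G u ≠ 0) : ContDiff ℝ n (arcDeriv G f) :=
  hf.deriv'.div hG hG0

theorem Function.Periodic.arcDeriv (hf : Periodic f c) (hG : Periodic G c) :
    Periodic (arcDeriv G f) c :=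
  hf.deriv.div hG

theorem intervalIntegral_arcDeriv_mul_mul_eq_neg (hpf : Periodic f c) (hph : Periodic h c)
    (hf : ContDiff ℝ 1 f) (hh : ContDiff ℝ 1 h) (hG0 : ∀ u, G u ≠ 0) :
    ∫ u in 0..c, arcDeriv G f u * h u * G u = -∫ u in 0..c, f u * arcDeriv G h u * G u := by
  have hfG : ∀ u, arcDeriv G f u * h u * G u = deriv f u * h u := fun u => by
    rw [mul_right_comm, arcDeriv_mul_self (hG0 u)]
  have hhG : ∀ u, f u * arcDeriv G h u * G u = f u * deriv h u := fun u => by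
    rw [mul_assoc, arcDeriv_mul_self (hG0 u)]
  simp_rw [hfG, hhG]
  exact intervalIntegral_deriv_mul_eq_neg_of_periodic hpf hph hf hh

theorem intervalIntegral_arcDeriv_arcDeriv_mul_mul_comm (hpf : Periodic f c) (hph : Periodic h c)
    (hpG : Periodic G c) (hf : ContDiff ℝ 2 f) (hh : ContDiff ℝ 2 h) (hG : ContDiff ℝ 1 G)
    (hG0 : ∀ u, G u ≠ 0) :
    ∫ u in 0..c, arcDeriv G (arcDeriv G f) u * h u * G u
      = ∫ u in 0..c, f u * arcDeriv G (arcDeriv G h) u * G u := by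
  rw [intervalIntegral_arcDeriv_mul_mul_eq_neg (hpf.arcDeriv hpG) hph (contDiff_arcDeriv hf hG hG0)
      (hh.of_le one_le_two) hG0,
    intervalIntegral_arcDeriv_mul_mul_eq_neg hpf (hph.arcDeriv hpG) (hf.of_le one_le_two)
      (contDiff_arcDeriv hh hG hG0) hG0, neg_neg]

end ArcDeriv

theorem hasDerivAt_intervalIntegral_of_contDiff {E : Type*} [NormedAddCommGroup E]
    [NormedSpace ℝ E] {F : ℝ → ℝ → E} (hF : ContDiff ℝ 1 (uncurry F)) (a b t : ℝ) :
    HasDerivAt (fun τ => ∫ u in a..b, F u τ) (∫ u in a..b, deriv (F u) t) t := by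
  set F' : ℝ → ℝ → E := fun u τ => fderiv ℝ (uncurry F) (u, τ) (0, 1)
  have hslice : ∀ u τ, HasDerivAt (F u) (F' u τ) τ := fun u τ =>
    (hF.differentiable one_ne_zero (u, τ)).hasFDerivAt.comp_hasDerivAt τ
      ((hasDerivAt_const τ u).prodMk (hasDerivAt_id τ))
  have hF'cont : Continuous (uncurry F') :=
    (hF.continuous_fderiv one_ne_zero).clm_apply continuous_const
  obtain ⟨C, hC⟩ := (isCompact_uIcc.prod (isCompact_closedBall t 1)).exists_bound_of_continuousOn
    hF'cont.continuousOn
  have hFτ : ∀ τ, Continuous fun u => F u τ := fun τ =>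
    hF.continuous.comp (continuous_id.prodMk continuous_const)
  have hD := intervalIntegral.hasDerivAt_integral_of_dominated_loc_of_deriv_le
    (μ := volume) (F := fun τ u => F u τ) (F' := fun τ u => F' u τ) (bound := fun _ => C)
    (Metric.ball_mem_nhds t one_pos) (.of_forall fun τ => (hFτ τ).aestronglyMeasurable)
    ((hFτ t).intervalIntegrable a b)
    (hF'cont.comp (continuous_id.prodMk continuous_const)).aestronglyMeasurable
    (.of_forall fun u hu τ hτ =>
      hC (u, τ) ⟨uIoc_subset_uIcc hu, Metric.ball_subset_closedBall hτ⟩)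
    intervalIntegrable_const (.of_forall fun u _ τ _ => hslice u τ)
  simpa only [(hslice _ t).deriv] using hD.2

theorem willmore_energy_dissipation {K G A B DK DG : ℝ → ℝ} {c : ℝ}
    (hK : ContDiff ℝ 4 K) (hG : ContDiff ℝ 3 G) (hA : ContDiff ℝ 1 A) (hG0 : ∀ u, G u ≠ 0)
    (hpK : Periodic K c) (hpG : Periodic G c) (hpA : Periodic A c)
    (hB : ∀ u, B u = -arcDeriv G (arcDeriv G K) u - 1 / 2 * K u ^ 3)
    (hDK : ∀ u, DK u = arcDeriv G (arcDeriv G B) u + A u * arcDeriv G K u + K u ^ 2 * B u)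
    (hDG : ∀ u, DG u = -G u * K u * B u + G u * arcDeriv G A u) :
    1 / 2 * ∫ u in 0..c, 2 * K u * DK u * G u + K u ^ 2 * DG u
      = -∫ u in 0..c, B u ^ 2 * G u := by
  have hK2 : ContDiff ℝ 2 K := hK.of_le (by norm_num)
  have hG2 : ContDiff ℝ 2 G := hG.of_le (by norm_num)
  have hG1 : ContDiff ℝ 1 G := hG.of_le (by norm_num)
  have hSSK : ContDiff ℝ 2 (arcDeriv G (arcDeriv G K)) :=
    contDiff_arcDeriv (contDiff_arcDeriv hK hG hG0) hG2 hG0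
  have hBeq : B = fun u => -arcDeriv G (arcDeriv G K) u - 1 / 2 * K u ^ 3 := funext hB
  have hB2 : ContDiff ℝ 2 B := hBeq ▸ hSSK.neg.sub (contDiff_const.mul (hK2.pow 3))
  have hpB : Periodic B c := hBeq ▸ fun u => by
    simp only [((hpK.arcDeriv hpG).arcDeriv hpG) u, hpK u]
  have hAK : ContDiff ℝ 1 (fun u => A u * K u ^ 2) := hA.mul ((hK2.of_le one_le_two).pow 2)
  have hpt : ∀ u, 2 * K u * DK u * G u + K u ^ 2 * DG u
      = 2 * (arcDeriv G (arcDeriv G B) u * K u * G u - B u * arcDeriv G (arcDeriv G K) u * G u)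
        + deriv (fun v => A v * K v ^ 2) u - 2 * (B u ^ 2 * G u) := fun u => by
    have hSSKu : arcDeriv G (arcDeriv G K) u = -B u - 1 / 2 * K u ^ 3 := by rw [hB]; ring
    have hdAK : deriv (fun v => A v * K v ^ 2) u
        = deriv A u * K u ^ 2 + A u * (2 * K u * deriv K u) := by
      rw [((hA.differentiable one_ne_zero u).hasDerivAt.fun_mul
        ((hK2.differentiable two_ne_zero u).hasDerivAt.fun_pow 2)).deriv]
      norm_num
    rw [hDK, hDG, hdAK, ← arcDeriv_mul_self (f := A) (hG0 u),
      ← arcDeriv_mul_self (f := K) (hG0 u), hSSKu]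
    ring
  have hSB : ContDiff ℝ 1 (arcDeriv G B) := contDiff_arcDeriv hB2 hG1 hG0
  have hSSB : Continuous (arcDeriv G (arcDeriv G B)) :=
    (contDiff_arcDeriv (n := 0) hSB (hG.of_le (by norm_num)) hG0).continuous
  have hKc := hK.continuous
  have hGc := hG.continuous
  have hBc := hB2.continuous
  have hSSKc := hSSK.continuous
  have hdAKc := hAK.continuous_deriv_one
  rw [intervalIntegral.integral_congr fun u _ => hpt u, intervalIntegral.integral_sub,
    intervalIntegral.integral_add, intervalIntegral.integral_const_mul,
    intervalIntegral.integral_sub, intervalIntegral.integral_const_mul,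
    intervalIntegral_arcDeriv_arcDeriv_mul_mul_comm hpB hpK hpG hB2 hK2 hG1 hG0,
    intervalIntegral_deriv_eq_zero_of_periodic (fun u => by simp only [hpA u, hpK u]) hAK]
  · ring
  all_goals exact Continuous.intervalIntegrable (by fun_prop) _ _

theorem willmore_flow_is_gradient_flow_general
    (T : ℝ) (k g α : ℝ → ℝ → ℝ)
    (hk : ContDiff ℝ (⊤ : ℕ∞) (Function.uncurry k))
    (hg : ContDiff ℝ (⊤ : ℕ∞) (Function.uncurry g))
    (hα : ContDiff ℝ (⊤ : ℕ∞) (Function.uncurry α))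
    (hkper : ∀ t, Function.Periodic (fun u => k u t) 1)
    (hgper : ∀ t, Function.Periodic (fun u => g u t) 1)
    (hαper : ∀ t, Function.Periodic (fun u => α u t) 1)
    (hgpos : ∀ u t, 0 < g u t)
    (β : ℝ → ℝ → ℝ)
    (hβdef : ∀ u t, β u t =
      -(arcDeriv (fun v => g v t) (arcDeriv (fun v => g v t) (fun v => k v t)) u)
        - (1 / 2 : ℝ) * (k u t) ^ 3)
    (heqk : ∀ u : ℝ, ∀ t ∈ Set.Ico (0:ℝ) T,
      deriv (fun τ => k u τ) t =
        arcDeriv (fun v => g v t) (arcDeriv (fun v => g v t) (fun v => β v t)) u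
          + α u t * arcDeriv (fun v => g v t) (fun v => k v t) u
          + (k u t) ^ 2 * β u t)
    (heqg : ∀ u : ℝ, ∀ t ∈ Set.Ico (0:ℝ) T,
      deriv (fun τ => g u τ) t =
        - g u t * k u t * β u t
          + g u t * arcDeriv (fun v => g v t) (fun v => α v t) u) :
    ∀ t ∈ Set.Ioo (0:ℝ) T,
      HasDerivAt (fun τ => (1 / 2 : ℝ) * ∫ u in (0:ℝ)..1, (k u τ) ^ 2 * g u τ)
        (-(∫ u in (0:ℝ)..1, (β u t) ^ 2 * g u t)) t ∧
      -(∫ u in (0:ℝ)..1, (β u t) ^ 2 * g u t) ≤ 0 := by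
  intro t ⟨ht0, htT⟩
  have ht : t ∈ Ico 0 T := ⟨ht0.le, htT⟩
  have slice {f : ℝ → ℝ → ℝ} (hf : ContDiff ℝ (⊤ : ℕ∞) (uncurry f)) (n : ℕ) :
      ContDiff ℝ n (fun u => f u t) :=
    contDiff_infty.mp (hf.comp (contDiff_id.prodMk contDiff_const)) n
  have hdensity : ContDiff ℝ 1 (uncurry fun u τ => k u τ ^ 2 * g u τ) :=
    contDiff_infty.mp ((hk.pow 2).mul hg) 1
  have hrate : ∀ u, deriv (fun τ => k u τ ^ 2 * g u τ) t
      = 2 * k u t * deriv (fun τ => k u τ) t * g u t + k u t ^ 2 * deriv (fun τ => g u τ) t := by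
    intro u
    have hdiff {f : ℝ → ℝ → ℝ} (hf : ContDiff ℝ (⊤ : ℕ∞) (uncurry f)) :
        DifferentiableAt ℝ (fun τ => f u τ) t :=
      (hf.comp (contDiff_const.prodMk contDiff_id)).differentiable (by simp) t
    rw [deriv_fun_mul ((hdiff hk).fun_pow 2) (hdiff hg), deriv_fun_pow (hdiff hk)]
    ring
  have hdissipation := willmore_energy_dissipation (slice hk 4) (slice hg 3) (slice hα 1)
    (fun u => (hgpos u t).ne') (hkper t) (hgper t) (hαper t) (hβdef · t) (heqk · t ht)
    (heqg · t ht)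
  refine ⟨?_, neg_nonpos.mpr (intervalIntegral.integral_nonneg zero_le_one fun u _ => ?_)⟩
  · rw [← hdissipation]
    simpa only [hrate] using
      (hasDerivAt_intervalIntegral_of_contDiff hdensity 0 1 t).const_mul (1 / 2 : ℝ)
  · have := hgpos u t
    positivity

/-- For an evolving family of closed plane curves with curvature `k`, local
length element `g > 0` and tangential velocity `α` (smooth, 1-periodic in `u`),
with the Willmore normal velocity `β = −∂_s²k − (1/2)k³`, and satisfying the
evolution equations `∂_t k = ∂_s²β + α ∂_s k + k²β`, `∂_t g = −gkβ + g ∂_s α`,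
the elastic energy `E(t) = (1/2)∫₀¹ k² g du` satisfies
`dE/dt = −∫₀¹ β² g du ≤ 0`: the Willmore flow is a gradient flow for `E`
and `E` is nonincreasing in time. -/
theorem willmore_flow_is_gradient_flow
    (T : ℝ) (hT : 0 < T) (k g α : ℝ → ℝ → ℝ)
    (hk : ContDiff ℝ (⊤ : ℕ∞) (Function.uncurry k))
    (hg : ContDiff ℝ (⊤ : ℕ∞) (Function.uncurry g))
    (hα : ContDiff ℝ (⊤ : ℕ∞) (Function.uncurry α))
    (hkper : ∀ t, Function.Periodic (fun u => k u t) 1)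
    (hgper : ∀ t, Function.Periodic (fun u => g u t) 1)
    (hαper : ∀ t, Function.Periodic (fun u => α u t) 1)
    (hgpos : ∀ u t, 0 < g u t)
    (β : ℝ → ℝ → ℝ)
    (hβdef : ∀ u t, β u t =
      -(arcDeriv (fun v => g v t) (arcDeriv (fun v => g v t) (fun v => k v t)) u)
        - (1 / 2 : ℝ) * (k u t) ^ 3)
    (heqk : ∀ u : ℝ, ∀ t ∈ Set.Ico (0:ℝ) T,
      deriv (fun τ => k u τ) t =
        arcDeriv (fun v => g v t) (arcDeriv (fun v => g v t) (fun v => β v t)) u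
          + α u t * arcDeriv (fun v => g v t) (fun v => k v t) u
          + (k u t) ^ 2 * β u t)
    (heqg : ∀ u : ℝ, ∀ t ∈ Set.Ico (0:ℝ) T,
      deriv (fun τ => g u τ) t =
        - g u t * k u t * β u t
          + g u t * arcDeriv (fun v => g v t) (fun v => α v t) u) :
    ∀ t ∈ Set.Ioo (0:ℝ) T,
      HasDerivAt (fun τ => (1 / 2 : ℝ) * ∫ u in (0:ℝ)..1, (k u τ) ^ 2 * g u τ)
        (-(∫ u in (0:ℝ)..1, (β u t) ^ 2 * g u t)) t ∧
      -(∫ u in (0:ℝ)..1, (β u t) ^ 2 * g u t) ≤ 0 :=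
  willmore_flow_is_gradient_flow_general T k g α hk hg hα hkper hgper hαper hgpos β hβdef heqk heqg
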